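/- arXiv:1411.0890 — 4 statements merged into one kernel-verified Lean document; each statement's English description precedes it below -/
import Mathlib

section
/- Let ξ, ξ₁, ξ₂, τ, τ₁, τ₂ be real numbers with ξ = ξ₁ + ξ₂, τ = τ₁ + τ₂, and ξ, ξ₁, ξ₂ all nonzero. Then max{3|ξξ₁ξ₂|, (ξ₁² + ξ₁ξ₂ + ξ₂²)/|ξξ₁ξ₂|} ≤ |(τ - ξ³ + 1/ξ) - (τ₁ - ξ₁³ + 1/ξ₁) - (τ₂ - ξ₂³ + 1/ξ₂)| ≤ 2·max{3|ξξ₁ξ₂|, (ξ₁² + ξ₁ξ₂ + ξ₂²)/|ξξ₁ξ₂|}. -/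
theorem ostrovsky_resonance_bounds (ξ ξ₁ ξ₂ τ τ₁ τ₂ : ℝ)
    (hξ : ξ = ξ₁ + ξ₂) (hτ : τ = τ₁ + τ₂)
    (h : ξ ≠ 0) (h1 : ξ₁ ≠ 0) (h2 : ξ₂ ≠ 0) :
    max (3 * |ξ * ξ₁ * ξ₂|) ((ξ₁ ^ 2 + ξ₁ * ξ₂ + ξ₂ ^ 2) / |ξ * ξ₁ * ξ₂|) ≤
        |(τ - ξ ^ 3 + 1 / ξ) - (τ₁ - ξ₁ ^ 3 + 1 / ξ₁) - (τ₂ - ξ₂ ^ 3 + 1 / ξ₂)| ∧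
      |(τ - ξ ^ 3 + 1 / ξ) - (τ₁ - ξ₁ ^ 3 + 1 / ξ₁) - (τ₂ - ξ₂ ^ 3 + 1 / ξ₂)| ≤
        2 * max (3 * |ξ * ξ₁ * ξ₂|) ((ξ₁ ^ 2 + ξ₁ * ξ₂ + ξ₂ ^ 2) / |ξ * ξ₁ * ξ₂|) := by
  set p : ℝ := ξ * ξ₁ * ξ₂ with hp
  have hpne : p ≠ 0 := by positivity
  have hpabs : |p| > 0 := abs_pos.mpr hpne
  have hQ : (0:ℝ) ≤ ξ₁ ^ 2 + ξ₁ * ξ₂ + ξ₂ ^ 2 := by nlinarith [sq_nonneg (ξ₁ + ξ₂), sq_nonneg (ξ₁ - ξ₂)]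
  have hres : (τ - ξ ^ 3 + 1 / ξ) - (τ₁ - ξ₁ ^ 3 + 1 / ξ₁) - (τ₂ - ξ₂ ^ 3 + 1 / ξ₂)
      = -((3 * p ^ 2 + (ξ₁ ^ 2 + ξ₁ * ξ₂ + ξ₂ ^ 2)) / p) := by
    subst hξ hτ
    field_simp
    ring
  have habs : |(τ - ξ ^ 3 + 1 / ξ) - (τ₁ - ξ₁ ^ 3 + 1 / ξ₁) - (τ₂ - ξ₂ ^ 3 + 1 / ξ₂)|
      = 3 * |p| + (ξ₁ ^ 2 + ξ₁ * ξ₂ + ξ₂ ^ 2) / |p| := by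
    rw [hres, abs_neg, abs_div]
    rw [abs_of_nonneg (by positivity : (0:ℝ) ≤ 3 * p ^ 2 + (ξ₁ ^ 2 + ξ₁ * ξ₂ + ξ₂ ^ 2))]
    field_simp
    nlinarith [sq_abs p]
  rw [habs]
  have hBnn : (0:ℝ) ≤ (ξ₁ ^ 2 + ξ₁ * ξ₂ + ξ₂ ^ 2) / |p| := by positivity
  have hAnn : (0:ℝ) ≤ 3 * |p| := by positivity
  constructor
  · rcases max_cases (3 * |p|) ((ξ₁ ^ 2 + ξ₁ * ξ₂ + ξ₂ ^ 2) / |p|) with ⟨hm, _⟩ | ⟨hm, _⟩ <;>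
      rw [hm] <;> linarith
  · rcases max_cases (3 * |p|) ((ξ₁ ^ 2 + ξ₁ * ξ₂ + ξ₂ ^ 2) / |p|) with ⟨hm, hle⟩ | ⟨hm, hle⟩ <;>
      rw [hm] <;> linarith
end

section
/- Let N be a natural number and let (γₙ) be reals with γ₀ ≥ 2^(N+2), γ_{n+1} = 2·log₂(γₙ) for 0 ≤ n ≤ N-1, and 6 ≤ γ_N < 8. Then the sum ∑_{n=0}^{N-1} 1/√(γₙ) is bounded by (√2 + 1)/2, uniformly in N and γ₀. -/
theorem gamma_sum_bound (N : ℕ) (γ : ℕ → ℝ)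
    (h0 : (2 : ℝ) ^ (N + 2) ≤ γ 0)
    (hrec : ∀ n < N, γ (n + 1) = 2 * Real.logb 2 (γ n))
    (hN1 : (6 : ℝ) ≤ γ N) (hN2 : γ N < 8) :
    ∑ n ∈ Finset.range N, 1 / Real.sqrt (γ n) ≤ (Real.sqrt 2 + 1) / 2 := by
  -- positivity: γ n ≥ 4 for all n ≤ N
  have hpos4 : ∀ n, n ≤ N → (4 : ℝ) ≤ γ n := by
    intro n
    induction n with
    | zero =>
      intro _
      refine le_trans ?_ h0
      calc (4 : ℝ) = 2 ^ 2 := by norm_num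
        _ ≤ 2 ^ (N + 2) := by
            apply pow_le_pow_right₀ (by norm_num); omega
    | succ n ih =>
      intro hn
      have h4 := ih (by omega)
      rw [hrec n (by omega)]
      have : (2 : ℝ) ≤ Real.logb 2 (γ n) := by
        calc (2 : ℝ) = Real.logb 2 (2 ^ (2:ℕ)) := by
              rw [Real.logb_pow, Real.logb_self_eq_one] <;> norm_num
          _ ≤ Real.logb 2 (γ n) := by
              apply Real.logb_le_logb_of_le (by norm_num : (1:ℝ)<2) (by norm_num)
              norm_num; linarith
      linarith
  -- backward bound
  have key : ∀ k, k ≤ N → (2 : ℝ) ^ (k + 2) ≤ γ (N - k) ∧ (2 * (k + 3) : ℝ) ≤ γ (N - k) := by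
    intro k
    induction k with
    | zero => intro _; simp; constructor <;> linarith
    | succ k ih =>
      intro hk
      obtain ⟨ih1, ih2⟩ := ih (by omega)
      have hNk : N - k = (N - (k + 1)) + 1 := by omega
      have hlt : N - (k + 1) < N := by omega
      have hrec' := hrec _ hlt
      rw [← hNk] at hrec'
      have hposx : (0 : ℝ) < γ (N - (k + 1)) := by
        have := hpos4 (N - (k + 1)) (by omega); linarith
      have hlog : ((k : ℝ) + 3) ≤ Real.logb 2 (γ (N - (k + 1))) := by
        rw [hrec'] at ih2; push_cast at ih2 ⊢; linarith
      have hx : (2 : ℝ) ^ ((k : ℝ) + 3) ≤ γ (N - (k + 1)) :=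
        (Real.le_logb_iff_rpow_le (by norm_num) hposx).mp hlog
      have hxx : (2 : ℝ) ^ (k + 3 : ℕ) ≤ γ (N - (k + 1)) := by
        refine le_trans (le_of_eq ?_) hx
        rw [← Real.rpow_natCast]; push_cast; ring_nf
      constructor
      · calc (2 : ℝ) ^ (k + 1 + 2) = 2 ^ (k + 3) := by ring_nf
          _ ≤ γ (N - (k + 1)) := hxx
      · refine le_trans ?_ hxx
        have hnat : ∀ m : ℕ, 2 * (m + 4) ≤ 2 ^ (m + 3) := by
          intro m
          induction m with
          | zero => norm_num
          | succ j ihj =>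
            have h2 : 2 ^ (j + 1 + 3) = 2 * 2 ^ (j + 3) := by ring
            omega
        have hnat := hnat k
        calc ((2 : ℝ) * (↑(k + 1) + 3)) = ((2 * (k + 4) : ℕ) : ℝ) := by push_cast; ring
          _ ≤ ((2 ^ (k + 3) : ℕ) : ℝ) := by exact_mod_cast hnat
          _ = (2 : ℝ) ^ (k + 3) := by push_cast; ring
  -- term bound
  set r : ℝ := Real.sqrt 2 / 2 with hr
  have hs2 : Real.sqrt 2 ^ 2 = 2 := Real.sq_sqrt (by norm_num)
  have hs2pos : (0 : ℝ) < Real.sqrt 2 := Real.sqrt_pos.mpr (by norm_num)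
  have hs2lt : Real.sqrt 2 < 2 := by nlinarith
  have hrpos : 0 < r := by positivity
  have hrlt : r < 1 := by rw [hr]; linarith
  have hterm : ∀ n ∈ Finset.range N, 1 / Real.sqrt (γ n) ≤ r ^ (N + 2 - n) := by
    intro n hn
    rw [Finset.mem_range] at hn
    have hk := (key (N - n) (by omega)).1
    have hNn : N - (N - n) = n := by omega
    rw [hNn] at hk
    have he : N - n + 2 = N + 2 - n := by omega
    rw [he] at hk
    have hsq : Real.sqrt 2 ^ (N + 2 - n) ≤ Real.sqrt (γ n) := by
      have hpe : ((Real.sqrt 2 ^ (N + 2 - n)) : ℝ) ^ 2 = 2 ^ (N + 2 - n) := by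
        rw [← pow_mul, mul_comm, pow_mul, hs2]
      have : Real.sqrt ((2 : ℝ) ^ (N + 2 - n)) ≤ Real.sqrt (γ n) :=
        Real.sqrt_le_sqrt hk
      rwa [← hpe, Real.sqrt_sq (by positivity)] at this
    have hsp : (0 : ℝ) < Real.sqrt 2 ^ (N + 2 - n) := by positivity
    rw [div_le_iff₀ (by linarith)]
    have : r ^ (N + 2 - n) * Real.sqrt 2 ^ (N + 2 - n) = 1 := by
      rw [← mul_pow, hr]
      rw [div_mul_eq_mul_div, ← sq, hs2]
      norm_num
    calc (1 : ℝ) = r ^ (N + 2 - n) * Real.sqrt 2 ^ (N + 2 - n) := this.symm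
      _ ≤ r ^ (N + 2 - n) * Real.sqrt (γ n) := by
          apply mul_le_mul_of_nonneg_left hsq (by positivity)
  have hsum : ∑ n ∈ Finset.range N, 1 / Real.sqrt (γ n)
      ≤ ∑ n ∈ Finset.range N, r ^ (N + 2 - n) := Finset.sum_le_sum hterm
  have hreflect : ∑ n ∈ Finset.range N, r ^ (N + 2 - n)
      = ∑ j ∈ Finset.range N, r ^ (j + 3) := by
    rw [← Finset.sum_range_reflect (fun j => r ^ (N + 2 - j)) N]
    apply Finset.sum_congr rfl
    intro j hj
    rw [Finset.mem_range] at hj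
    congr 1
    omega
  have hgeom : ∑ j ∈ Finset.range N, r ^ (j + 3) ≤ r ^ 3 * (1 / (1 - r)) := by
    have : ∑ j ∈ Finset.range N, r ^ (j + 3) = r ^ 3 * ∑ j ∈ Finset.range N, r ^ j := by
      rw [Finset.mul_sum]
      apply Finset.sum_congr rfl
      intro j _
      rw [pow_add]; ring
    rw [this]
    apply mul_le_mul_of_nonneg_left _ (by positivity)
    have h1r : 0 < 1 - r := by linarith
    rw [geom_sum_eq (ne_of_lt hrlt)]
    have heq : (r ^ N - 1) / (r - 1) = (1 - r ^ N) / (1 - r) := by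
      rw [← neg_div_neg_eq]; ring_nf
    rw [heq, div_le_div_iff₀ h1r h1r]
    have : (0:ℝ) ≤ r ^ N := by positivity
    nlinarith
  have hfinal : r ^ 3 * (1 / (1 - r)) = (Real.sqrt 2 + 1) / 2 := by
    have h2s : (2 : ℝ) - Real.sqrt 2 ≠ 0 := by intro h; nlinarith
    have h1r : (1 : ℝ) - r ≠ 0 := by intro h; rw [hr] at h; nlinarith [hrlt]
    rw [hr]
    field_simp
    ring_nf
    nlinarith [hs2, Real.sqrt_nonneg 2]
  calc ∑ n ∈ Finset.range N, 1 / Real.sqrt (γ n)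
      ≤ ∑ n ∈ Finset.range N, r ^ (N + 2 - n) := hsum
    _ = ∑ j ∈ Finset.range N, r ^ (j + 3) := hreflect
    _ ≤ r ^ 3 * (1 / (1 - r)) := hgeom
    _ = (Real.sqrt 2 + 1) / 2 := hfinal
end

section
/- Let ξ be a real number with |ξ| ≥ 2. Then the set of real ξ₁ satisfying 8/(9ξ²) ≤ ξ₁(ξ - ξ₁) ≤ 8/(3ξ²) has Lebesgue measure at most C·|ξ|^{-2} for some absolute constant C. -/
/-!
Completing the square, `x * (s - x) = s ^ 2 / 4 - (x - s / 2) ^ 2`, turns the condition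
`a ≤ x * (s - x) ≤ b` into `p ≤ (x - s / 2) ^ 2 ≤ q` with `q - p = b - a`. That is two intervals,
each of length `√q - √p ≤ (q - p) / √p`. For `|ξ| ≥ 2` the gap is `b - a = 16 / (9 ξ²)` and
`p = ξ² / 4 - 8 / (3 ξ²) ≥ 1 / 3`.
-/

open MeasureTheory Real

theorem volume_setOf_sq_sub_mem_Icc_le (m p q : ℝ) :
    volume {x : ℝ | p ≤ (x - m) ^ 2 ∧ (x - m) ^ 2 ≤ q} ≤ 2 * ENNReal.ofReal (√q - √p) := by
  have hsub : {x : ℝ | p ≤ (x - m) ^ 2 ∧ (x - m) ^ 2 ≤ q} ⊆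
      Set.Icc (m - √q) (m - √p) ∪ Set.Icc (m + √p) (m + √q) := by
    rintro x ⟨hp, hq⟩
    have hlow : √p ≤ |x - m| := sqrt_sq_eq_abs (x - m) ▸ sqrt_le_sqrt hp
    have hup : |x - m| ≤ √q := sqrt_sq_eq_abs (x - m) ▸ sqrt_le_sqrt hq
    rcases le_or_gt 0 (x - m) with h | h
    · rw [abs_of_nonneg h] at hlow hup
      exact Or.inr ⟨by linarith, by linarith⟩
    · rw [abs_of_neg h] at hlow hup
      exact Or.inl ⟨by linarith, by linarith⟩
  calc volume {x : ℝ | p ≤ (x - m) ^ 2 ∧ (x - m) ^ 2 ≤ q}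
      ≤ volume (Set.Icc (m - √q) (m - √p)) + volume (Set.Icc (m + √p) (m + √q)) :=
        (measure_mono hsub).trans (measure_union_le _ _)
    _ = 2 * ENNReal.ofReal (√q - √p) := by
        rw [Real.volume_Icc, Real.volume_Icc, two_mul]
        congr 2 <;> ring

theorem sqrt_sub_sqrt_le_div {p q : ℝ} (hp : 0 < p) (hpq : p ≤ q) :
    √q - √p ≤ (q - p) / √p := by
  have hsp : 0 < √p := sqrt_pos.mpr hp
  rw [le_div_iff₀ hsp]
  nlinarith [sq_sqrt hp.le, sq_sqrt (hp.le.trans hpq), sqrt_le_sqrt hpq]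

theorem volume_setOf_mul_sub_mem_Icc_le {a b : ℝ} (s : ℝ) (hab : a ≤ b) (hb : b < s ^ 2 / 4) :
    volume {x : ℝ | a ≤ x * (s - x) ∧ x * (s - x) ≤ b} ≤
      ENNReal.ofReal (2 * (b - a) / √(s ^ 2 / 4 - b)) := by
  have hset : {x : ℝ | a ≤ x * (s - x) ∧ x * (s - x) ≤ b} =
      {x : ℝ | s ^ 2 / 4 - b ≤ (x - s / 2) ^ 2 ∧ (x - s / 2) ^ 2 ≤ s ^ 2 / 4 - a} := by
    ext x
    constructor <;> rintro ⟨h₁, h₂⟩ <;> constructor <;> linarith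
  have hsqrt := sqrt_sub_sqrt_le_div (q := s ^ 2 / 4 - a) (sub_pos.mpr hb) (by linarith)
  rw [hset]
  refine (volume_setOf_sq_sub_mem_Icc_le _ _ _).trans ?_
  rw [← ENNReal.ofReal_ofNat 2, ← ENNReal.ofReal_mul zero_le_two, mul_div_assoc]
  refine ENNReal.ofReal_le_ofReal ?_
  rw [sub_sub_sub_cancel_left] at hsqrt
  linarith

theorem xi1_measure_bound :
    ∃ C > 0, ∀ ξ : ℝ, 2 ≤ |ξ| →
      MeasureTheory.volume
          {ξ₁ : ℝ | 8 / (9 * ξ ^ 2) ≤ ξ₁ * (ξ - ξ₁) ∧ ξ₁ * (ξ - ξ₁) ≤ 8 / (3 * ξ ^ 2)} ≤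
        ENNReal.ofReal (C / ξ ^ 2) := by
  refine ⟨8, by norm_num, fun ξ hξ => ?_⟩
  have hξ2 : 4 ≤ ξ ^ 2 := by nlinarith [sq_abs ξ, abs_nonneg ξ]
  have hb : 8 / (3 * ξ ^ 2) ≤ 2 / 3 := by
    rw [div_le_div_iff₀ (by positivity) (by norm_num)]; nlinarith
  have hroot : 1 / 2 ≤ √(ξ ^ 2 / 4 - 8 / (3 * ξ ^ 2)) :=
    le_sqrt_of_sq_le (by linarith)
  refine (volume_setOf_mul_sub_mem_Icc_le ξ ?_ (by linarith)).trans (ENNReal.ofReal_le_ofReal ?_)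
  · gcongr; norm_num
  · have hgap : 8 / (3 * ξ ^ 2) - 8 / (9 * ξ ^ 2) = 16 / 9 / ξ ^ 2 := by
      field_simp; ring
    have hscaled := mul_le_mul_of_nonneg_left hroot (by positivity : (0 : ℝ) ≤ 8 / ξ ^ 2)
    rw [hgap, div_le_iff₀ (by linarith)]
    calc 2 * (16 / 9 / ξ ^ 2) ≤ 8 / ξ ^ 2 * (1 / 2) := by
          rw [← sub_nonneg]; ring_nf; positivity
      _ ≤ _ := hscaled
end

section
/- Let ξ₂ be a real number with |ξ₂| ≥ 2. Then the set of real ξ satisfying |1 + 4/(3ξ(ξ-ξ₂)ξ₂²)| ≤ 1/2 (with ξ(ξ-ξ₂) ≠ 0) has Lebesgue measure at most C·|ξ₂|^{-2} for an absolute constant C. -/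
/-!
Put `t = ξ₂²` and `q = ξ (ξ - ξ₂)`. The condition `|1 + 4 / (3 q t)| ≤ 1/2` forces
`q ∈ [-8/(3t), -8/(9t)]`, and since `(ξ - ξ₂/2)² = q + t/4` the point `ξ` lies in the set where
`(ξ - ξ₂/2)²` ranges over an interval `[a, b]` of length `16/(9t)` with `a ≥ 1/4`. That set is two
intervals of total length `2(√b - √a) ≤ (b - a)/√a ≤ 2(b - a)`, which is `O(1/t)`.
-/

open MeasureTheory Set

lemma mem_Icc_of_abs_one_add_div_le_half {c q : ℝ} (hc : 0 < c) (h : |1 + c / q| ≤ 1 / 2) :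
    q ∈ Icc (-2 * c) (-2 * c / 3) := by
  obtain ⟨hlo, hhi⟩ := abs_le.1 h
  have hq : q < 0 := by
    by_contra! hq
    have : 0 ≤ c / q := div_nonneg hc.le hq
    linarith
  have hlo' : -(3 / 2) ≤ c / q := by linarith
  have hhi' : c / q ≤ -(1 / 2) := by linarith
  rw [le_div_iff_of_neg hq] at hlo'
  rw [div_le_iff_of_neg hq] at hhi'
  constructor <;> linarith

lemma volume_setOf_abs_sub_mem_Icc_le (m r R : ℝ) :
    volume {x : ℝ | |x - m| ∈ Icc r R} ≤ 2 * ENNReal.ofReal (R - r) := by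
  have hsub : {x : ℝ | |x - m| ∈ Icc r R} ⊆ Icc (m - R) (m - r) ∪ Icc (m + r) (m + R) := by
    rintro x ⟨hr, hR⟩
    rcases le_or_gt 0 (x - m) with hx | hx
    · rw [abs_of_nonneg hx] at hr hR
      exact Or.inr ⟨by linarith, by linarith⟩
    · rw [abs_of_neg hx] at hr hR
      exact Or.inl ⟨by linarith, by linarith⟩
  calc volume {x : ℝ | |x - m| ∈ Icc r R}
      ≤ volume (Icc (m - R) (m - r)) + volume (Icc (m + r) (m + R)) :=
        (measure_mono hsub).trans (measure_union_le _ _)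
    _ = 2 * ENNReal.ofReal (R - r) := by
        rw [Real.volume_Icc, Real.volume_Icc, two_mul]
        congr 2 <;> ring

lemma volume_setOf_sq_sub_mem_Icc_le_s15 (m : ℝ) {a b : ℝ} (ha : 0 < a) (hab : a ≤ b) :
    volume {x : ℝ | (x - m) ^ 2 ∈ Icc a b} ≤ ENNReal.ofReal ((b - a) / √a) := by
  have hsub : {x : ℝ | (x - m) ^ 2 ∈ Icc a b} ⊆ {x : ℝ | |x - m| ∈ Icc (√a) (√b)} := by
    rintro x ⟨hxa, hxb⟩
    rw [mem_ofPred_eq, ← Real.sqrt_sq_eq_abs]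
    exact ⟨Real.sqrt_le_sqrt hxa, Real.sqrt_le_sqrt hxb⟩
  have hsqa : 0 < √a := Real.sqrt_pos.2 ha
  have hkey : 2 * (√b - √a) ≤ (b - a) / √a := by
    rw [le_div_iff₀ hsqa]
    nlinarith [sq_nonneg (√a - √b), Real.sq_sqrt ha.le, Real.sq_sqrt (ha.le.trans hab)]
  calc volume {x : ℝ | (x - m) ^ 2 ∈ Icc a b}
      ≤ 2 * ENNReal.ofReal (√b - √a) :=
        (measure_mono hsub).trans (volume_setOf_abs_sub_mem_Icc_le m _ _)
    _ = ENNReal.ofReal (2 * (√b - √a)) := by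
        rw [ENNReal.ofReal_mul zero_le_two, ENNReal.ofReal_ofNat]
    _ ≤ ENNReal.ofReal ((b - a) / √a) := ENNReal.ofReal_le_ofReal hkey

theorem xi_measure_bound :
    ∃ C > 0, ∀ ξ₂ : ℝ, 2 ≤ |ξ₂| →
      MeasureTheory.volume
          {ξ : ℝ | ξ * (ξ - ξ₂) ≠ 0 ∧ |1 + 4 / (3 * ξ * (ξ - ξ₂) * ξ₂ ^ 2)| ≤ 1 / 2} ≤
        ENNReal.ofReal (C / ξ₂ ^ 2) := by
  refine ⟨4, by norm_num, fun ξ₂ hξ₂ => ?_⟩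
  set t := ξ₂ ^ 2
  have ht : 4 ≤ t := by nlinarith [sq_abs ξ₂]
  set c := 4 / (3 * t) with hc_def
  have hc : 0 < c := by positivity
  have hc_le : c ≤ 1 / 3 := by rw [div_le_div_iff₀ (by positivity) (by norm_num)]; linarith
  have hsub : {ξ : ℝ | ξ * (ξ - ξ₂) ≠ 0 ∧ |1 + 4 / (3 * ξ * (ξ - ξ₂) * t)| ≤ 1 / 2} ⊆
      {ξ : ℝ | (ξ - ξ₂ / 2) ^ 2 ∈ Icc (t / 4 - 2 * c) (t / 4 - 2 * c / 3)} := by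
    rintro ξ ⟨-, h⟩
    rw [show 3 * ξ * (ξ - ξ₂) * t = 3 * t * (ξ * (ξ - ξ₂)) by ring, ← div_div] at h
    obtain ⟨hlo, hhi⟩ := mem_Icc_of_abs_one_add_div_le_half hc h
    have hsq : (ξ - ξ₂ / 2) ^ 2 = ξ * (ξ - ξ₂) + t / 4 := by ring
    simp only [mem_ofPred_eq, mem_Icc, hsq]
    constructor <;> linarith
  have hsqrt : 1 / 2 ≤ √(t / 4 - 2 * c) := Real.le_sqrt_of_sq_le (by linarith)
  calc volume {ξ : ℝ | ξ * (ξ - ξ₂) ≠ 0 ∧ |1 + 4 / (3 * ξ * (ξ - ξ₂) * t)| ≤ 1 / 2}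
      ≤ ENNReal.ofReal ((t / 4 - 2 * c / 3 - (t / 4 - 2 * c)) / √(t / 4 - 2 * c)) :=
        (measure_mono hsub).trans (volume_setOf_sq_sub_mem_Icc_le_s15 _ (by linarith) (by linarith))
    _ ≤ ENNReal.ofReal (4 / t) := by
        apply ENNReal.ofReal_le_ofReal
        rw [div_le_iff₀ (by linarith)]
        calc t / 4 - 2 * c / 3 - (t / 4 - 2 * c) = 16 / 9 / t := by rw [hc_def]; field_simp; ring
          _ ≤ 4 / t * (1 / 2) := by
            rw [div_mul_eq_mul_div, div_le_div_iff_of_pos_right (by positivity)]; norm_num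
          _ ≤ 4 / t * √(t / 4 - 2 * c) := by gcongr
end
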